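/- The Jacobian ring of the Hori–Vafa superpotential W = x + y + t/(xy), namely ℂ[x^±, y^±]/(x∂W/∂x, y∂W/∂y), is isomorphic as a ring to ℂ[z]/(z³ − t) (for t ≠ 0), which matches the small quantum cohomology ring QH*(ℙ²) = ℂ[H]/(H³ − t) under H ↦ x. -/

import Mathlib

/-- The Laurent polynomial ring `ℂ[x^±, y^±]`, modeled as the group algebra
of `ℤ²` over `ℂ`. -/
abbrev LaurentTwo := AddMonoidAlgebra ℂ (ℤ × ℤ)

/-- The monomial `x^i y^j` with coefficient `c`. -/
noncomputable def laurentMono (i j : ℤ) (c : ℂ) : LaurentTwo :=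
  AddMonoidAlgebra.single (i, j) c

/-! The relations of the Jacobian ring say `x = t/(xy) = y`, hence `x³ = x·y·x = xy · t/(xy) = t`,
and every monomial `x^i y^j` equals `x^(i+j)`. So a `ℂ`-algebra map out of the Jacobian ring is
determined by the image of `x`, and any unit `u` with `u³ = t` is the image of `x` under one
(namely `x^i y^j ↦ u^(i+j)`). For `t ≠ 0` the root `z` of `z³ - t` is such a unit, so `z ↦ x` and
`x ↦ z` are mutually inverse. -/

open Polynomial

theorem isUnit_root_X_pow_sub_C {K : Type*} [Field K] {n : ℕ} (hn : n ≠ 0) {a : K} (ha : a ≠ 0) :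
    IsUnit (AdjoinRoot.root (X ^ n - C a)) := by
  rw [← isUnit_pow_iff hn, root_X_pow_sub_C_pow]
  exact ha.isUnit.map _

noncomputable section

namespace HoriVafa

lemma laurentMono_mul (i j i' j' : ℤ) (c c' : ℂ) :
    laurentMono i j c * laurentMono i' j' c' = laurentMono (i + i') (j + j') (c * c') :=
  AddMonoidAlgebra.single_mul_single _ _ _ _

lemma laurentMono_eq_smul (i j : ℤ) (c : ℂ) : laurentMono i j c = c • laurentMono i j 1 := by
  rw [laurentMono, laurentMono, AddMonoidAlgebra.smul_single', mul_one]

def diagonalZPowers {M : Type*} [Monoid M] (u : Mˣ) : Multiplicative (ℤ × ℤ) →* M :=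
  (Units.coeHom M).comp <| (zpowersHom Mˣ u).comp <|
    AddMonoidHom.toMultiplicative (AddMonoidHom.coprod (AddMonoidHom.id ℤ) (AddMonoidHom.id ℤ))

abbrev jacobianIdeal (t : ℂ) : Ideal LaurentTwo :=
  Ideal.span {laurentMono 1 0 1 - laurentMono (-1) (-1) t,
    laurentMono 0 1 1 - laurentMono (-1) (-1) t}

abbrev JacobianRing (t : ℂ) := LaurentTwo ⧸ jacobianIdeal t

variable (t : ℂ)

def xClass : JacobianRing t := Ideal.Quotient.mk _ (laurentMono 1 0 1)

def yClass : JacobianRing t := Ideal.Quotient.mk _ (laurentMono 0 1 1)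

def xyInvClass : JacobianRing t := Ideal.Quotient.mk _ (laurentMono (-1) (-1) 1)

section lift

variable {A : Type*} [CommRing A] [Algebra ℂ A]

lemma lift_diagonalZPowers_laurentMono (u : Aˣ) (i j : ℤ) (c : ℂ) :
    AddMonoidAlgebra.lift ℂ A (ℤ × ℤ) (diagonalZPowers u) (laurentMono i j c) =
      c • ↑(u ^ (i + j)) :=
  AddMonoidAlgebra.lift_single _ _ _

variable {t}

lemma smul_zpow_neg_two_of_pow_three {u : Aˣ} (hu : (u : A) ^ 3 = algebraMap ℂ A t) :
    t • (↑(u ^ (-2 : ℤ)) : A) = u := by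
  rw [Algebra.smul_def, ← hu, ← Units.val_pow_eq_pow_val, ← Units.val_mul, ← zpow_natCast,
    ← zpow_add]
  norm_num

variable (t) in
def lift (u : Aˣ) (hu : (u : A) ^ 3 = algebraMap ℂ A t) : JacobianRing t →ₐ[ℂ] A :=
  Ideal.Quotient.liftₐ _ (AddMonoidAlgebra.lift ℂ A (ℤ × ℤ) (diagonalZPowers u)) <| by
    have h_gen : ∀ i j : ℤ, i + j = 1 → AddMonoidAlgebra.lift ℂ A (ℤ × ℤ) (diagonalZPowers u)
        (laurentMono i j 1 - laurentMono (-1) (-1) t) = 0 := by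
      intro i j hij
      rw [map_sub, lift_diagonalZPowers_laurentMono, lift_diagonalZPowers_laurentMono, hij,
        one_smul, zpow_one, show (-1 : ℤ) + -1 = -2 by norm_num,
        smul_zpow_neg_two_of_pow_three hu, sub_self]
    have h_le : jacobianIdeal t ≤
        RingHom.ker (AddMonoidAlgebra.lift ℂ A (ℤ × ℤ) (diagonalZPowers u)) := by
      rw [Ideal.span_le, Set.pair_subset_iff]
      exact ⟨h_gen 1 0 (add_zero 1), h_gen 0 1 (zero_add 1)⟩
    exact fun a ha => h_le ha

lemma lift_xClass (u : Aˣ) (hu : (u : A) ^ 3 = algebraMap ℂ A t) : lift t u hu (xClass t) = u :=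
  (lift_diagonalZPowers_laurentMono u 1 0 1).trans (by simp)

end lift

lemma mk_laurentMono (i j : ℤ) (c : ℂ) :
    Ideal.Quotient.mk (jacobianIdeal t) (laurentMono i j c) =
      algebraMap ℂ _ c * Ideal.Quotient.mk _ (laurentMono i j 1) := by
  rw [laurentMono_eq_smul, Algebra.smul_def, map_mul]
  rfl

lemma xClass_eq : xClass t = algebraMap ℂ _ t * xyInvClass t := by
  rw [xClass, xyInvClass, ← mk_laurentMono, ← sub_eq_zero, ← map_sub,
    Ideal.Quotient.eq_zero_iff_mem]
  exact Ideal.subset_span (Set.mem_insert _ _)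

lemma yClass_eq : yClass t = algebraMap ℂ _ t * xyInvClass t := by
  rw [yClass, xyInvClass, ← mk_laurentMono, ← sub_eq_zero, ← map_sub,
    Ideal.Quotient.eq_zero_iff_mem]
  exact Ideal.subset_span (Set.mem_insert_of_mem _ rfl)

lemma xClass_mul_yClass_mul_xyInvClass : xClass t * yClass t * xyInvClass t = 1 := by
  rw [xClass, yClass, xyInvClass, ← map_mul, ← map_mul, laurentMono_mul, laurentMono_mul]
  norm_num
  rfl

lemma xClass_pow_three : xClass t ^ 3 = algebraMap ℂ (JacobianRing t) t := by
  linear_combination xClass t ^ 2 * ((xClass_eq t).trans (yClass_eq t).symm) +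
    xClass t * yClass t * xClass_eq t + algebraMap ℂ _ t * xClass_mul_yClass_mul_xyInvClass t

def monomialUnit : Multiplicative (ℤ × ℤ) →* (JacobianRing t)ˣ :=
  ((Ideal.Quotient.mk (jacobianIdeal t)).toMonoidHom.comp
    (AddMonoidAlgebra.of ℂ (ℤ × ℤ))).toHomUnits

lemma monomialUnit_eq_zpow (i j : ℤ) :
    monomialUnit t (Multiplicative.ofAdd (i, j)) =
      monomialUnit t (Multiplicative.ofAdd (1, 0)) ^ (i + j) := by
  have h_xy : monomialUnit t (Multiplicative.ofAdd (1, 0)) =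
      monomialUnit t (Multiplicative.ofAdd (0, 1)) :=
    Units.ext <| (xClass_eq t).trans (yClass_eq t).symm
  have h_split : Multiplicative.ofAdd ((i, j) : ℤ × ℤ) =
      Multiplicative.ofAdd (1, 0) ^ i * Multiplicative.ofAdd (0, 1) ^ j := by
    rw [← ofAdd_zsmul, ← ofAdd_zsmul, ← ofAdd_add]
    simp
  rw [h_split, map_mul, map_zpow, map_zpow, ← h_xy, ← zpow_add]

theorem algHom_ext {A : Type*} [Semiring A] [Algebra ℂ A] ⦃φ ψ : JacobianRing t →ₐ[ℂ] A⦄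
    (h : φ (xClass t) = ψ (xClass t)) : φ = ψ := by
  have hx : Units.map (φ : JacobianRing t →* A) (monomialUnit t (Multiplicative.ofAdd (1, 0))) =
      Units.map (ψ : JacobianRing t →* A) (monomialUnit t (Multiplicative.ofAdd (1, 0))) :=
    Units.ext h
  refine Ideal.Quotient.algHom_ext ℂ
    (AddMonoidAlgebra.algHom_ext (fun ⟨i, j⟩ => ?_) (Subsingleton.elim _ _))
  change φ (monomialUnit t (Multiplicative.ofAdd (i, j))) =
    ψ (monomialUnit t (Multiplicative.ofAdd (i, j)))
  have := congrArg (fun v : Aˣ => ((v ^ (i + j) : Aˣ) : A)) hx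
  rwa [← map_zpow (Units.map (φ : JacobianRing t →* A)),
    ← map_zpow (Units.map (ψ : JacobianRing t →* A)), ← monomialUnit_eq_zpow] at this

end HoriVafa

end

open HoriVafa

/-- The Jacobian ring of the Hori–Vafa superpotential `W = x + y + t/(xy)`,
namely `ℂ[x^±, y^±]/(x∂W/∂x, y∂W/∂y)` with `x∂W/∂x = x - t/(xy)` and
`y∂W/∂y = y - t/(xy)`, is isomorphic as a ring to `ℂ[z]/(z³ - t)` for
`t ≠ 0`, matching `QH*(ℙ²) = ℂ[H]/(H³ - t)` under `H ↦ x`. -/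
theorem jacobian_ring_hori_vafa (t : ℂ) (ht : t ≠ 0) :
    ∃ e : (Polynomial ℂ ⧸ Ideal.span {Polynomial.X ^ 3 - Polynomial.C t}) ≃+*
        (LaurentTwo ⧸ Ideal.span
          {laurentMono 1 0 1 - laurentMono (-1) (-1) t,
           laurentMono 0 1 1 - laurentMono (-1) (-1) t}),
      e (Ideal.Quotient.mk _ Polynomial.X) =
        Ideal.Quotient.mk _ (laurentMono 1 0 1) := by
  obtain ⟨z, hz⟩ := isUnit_root_X_pow_sub_C three_ne_zero ht
  have hz3 : (z : AdjoinRoot (X ^ 3 - C t)) ^ 3 = algebraMap ℂ _ t :=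
    hz ▸ root_X_pow_sub_C_pow 3 t
  let toJacobian : AdjoinRoot (X ^ 3 - C t) →ₐ[ℂ] JacobianRing t :=
    AdjoinRoot.liftAlgHom _ (Algebra.ofId ℂ _) (xClass t) (by simp [xClass_pow_three])
  have h_root : toJacobian (AdjoinRoot.root _) = xClass t := AdjoinRoot.liftAlgHom_root ..
  let e : AdjoinRoot (X ^ 3 - C t) ≃ₐ[ℂ] JacobianRing t :=
    AlgEquiv.ofAlgHom toJacobian (lift t z hz3)
      (algHom_ext t (by simp [lift_xClass, hz, h_root]))
      (AdjoinRoot.algHom_ext (by simp [lift_xClass, hz, h_root]))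
  exact ⟨e.toRingEquiv, h_root⟩
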